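/- Let N be a closed subspace of a complex Hilbert space E and let (M_i)_{i ∈ I} be a family of closed subspaces of E such that P_{M_i} commutes with P_N for every i ∈ I. Then N ⊓ (topological closure of ⨆_{i} M_i) = topological closure of ⨆_{i} (N ⊓ M_i). -/

import Mathlib

/-! If `P_N` commutes with `P_{M_i}`, then `P_N` maps `M_i` into `N ⊓ M_i`, hence maps `⨆ M_i`
into `⨆ (N ⊓ M_i)` and, being continuous, maps the closure of the former into the closure of the
latter. A vector of `N` is fixed by `P_N`, which gives `≤`; the reverse inclusion is monotonicity
of `⊓`, `⨆` and closure. -/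

variable {E : Type*} [NormedAddCommGroup E] [InnerProductSpace ℂ E] [CompleteSpace E]

/-- Orthogonal projection onto (the topological closure of) a submodule, as a
continuous linear operator on `E`. For a closed subspace `K` this is the
orthogonal projection `P_K` onto `K` itself. -/
noncomputable def proj (K : Submodule ℂ E) : E →L[ℂ] E :=
  K.topologicalClosure.subtypeL.comp (Submodule.orthogonalProjectionOnto K.topologicalClosure)

theorem proj_apply_mem (K : Submodule ℂ E) (x : E) : proj K x ∈ K.topologicalClosure :=
  K.topologicalClosure.starProjection_apply_mem x

theorem proj_apply_eq_self {K : Submodule ℂ E} {x : E} (hx : x ∈ K.topologicalClosure) :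
    proj K x = x :=
  K.topologicalClosure.starProjection_eq_self_iff.mpr hx

theorem proj_apply_mem_inf_of_comm {K L : Submodule ℂ E}
    (hcomm : proj L ∘L proj K = proj K ∘L proj L) {x : E} (hx : x ∈ L.topologicalClosure) :
    proj K x ∈ K.topologicalClosure ⊓ L.topologicalClosure := by
  refine ⟨proj_apply_mem K x, ?_⟩
  have hfix : proj K x = proj L (proj K x) := by
    conv_lhs => rw [← proj_apply_eq_self hx]
    exact (ContinuousLinearMap.ext_iff.mp hcomm x).symm
  exact hfix ▸ proj_apply_mem L _

theorem map_proj_iSup_le_iSup_inf {ι : Type*} {N : Submodule ℂ E} {M : ι → Submodule ℂ E}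
    (hN : IsClosed (N : Set E)) (hM : ∀ i, IsClosed (M i : Set E))
    (hcomm : ∀ i, proj (M i) ∘L proj N = proj N ∘L proj (M i)) :
    (⨆ i, M i).map (proj N : E →ₗ[ℂ] E) ≤ ⨆ i, N ⊓ M i := by
  rw [Submodule.map_iSup]
  refine iSup_mono fun i => Submodule.map_le_iff_le_comap.mpr fun x hx => ?_
  have h := proj_apply_mem_inf_of_comm (hcomm i) ((M i).le_topologicalClosure hx)
  rwa [hN.submodule_topologicalClosure_eq, (hM i).submodule_topologicalClosure_eq] at h

theorem stmt12 {ι : Type*} (N : Submodule ℂ E) (M : ι → Submodule ℂ E)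
    (hN : IsClosed (N : Set E)) (hM : ∀ i, IsClosed ((M i : Set E)))
    (hcomm : ∀ i, proj (M i) ∘L proj N = proj N ∘L proj (M i)) :
    N ⊓ (⨆ i, M i).topologicalClosure = (⨆ i, N ⊓ M i).topologicalClosure := by
  apply le_antisymm
  · rintro x ⟨hxN, hxM⟩
    have hfix : proj N x = x := proj_apply_eq_self (N.le_topologicalClosure hxN)
    have hmap : (⨆ i, M i).topologicalClosure.map (proj N : E →ₗ[ℂ] E) ≤
        (⨆ i, N ⊓ M i).topologicalClosure :=
      ((⨆ i, M i).topologicalClosure_map (proj N)).trans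
        (Submodule.topologicalClosure_mono (map_proj_iSup_le_iSup_inf hN hM hcomm))
    exact hfix ▸ hmap ⟨x, hxM, rfl⟩
  · refine Submodule.topologicalClosure_minimal _ (iSup_le fun i => ?_)
      (hN.inter (⨆ i, M i).isClosed_topologicalClosure)
    exact inf_le_inf_left N ((le_iSup M i).trans (⨆ i, M i).le_topologicalClosure)
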